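/- With the list assignment L of Lemma 'upper lemma 1': if φ is a proper L-coloring of G = K_{5⋆(a+1),2⋆(k−a−1)} and U_i is a partite set of size 5 with |φ(U_i)| = 2, then φ(U_i) ⊆ A_6 ∪ B_6, where A_6 = ∪_{j=1}^{c}{s_{j,1},s_{j,2},s_{j,3}} and B_6 = ∪_{j=1}^{b}{t_{j,1},t_{j,2}}. -/

import Mathlib

/-!
Every colour of `A_j ∪ B_j` is some `s_{i,m}` or `t_{i,q}`, and which lists `A_J ∪ B_J` it lies
in depends only on its index `m` or `q`; a finite check on the index sets shows that no colour
lies in all five lists of `U_i`, and that two colours covering all five lists both lie in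
`A_6 ∪ B_6`.

The rest is counting. For `k = 0, 1` the `2b + 3c - 1` vertices `v_{w,k}` receive distinct
colours from the palette `A_{6+k} ∪ B_{6+k} ∪ E` of size at most `3c + 2b + a`, none of them
used on a big part. Hence, summed over the `a + 1` big parts `U_{i'}`, the number of colours
of `U_{i'}` in the first palette plus the number in the second is at most `2a + 2`. Each
summand is at least `2`: every colour of `U_{i'}` lies in one of the palettes, an `E`-colour
in both, and a single colour cannot cover `U_{i'}`. So every summand is `2`, and if `|φ(U_i)| = 2` the two
colours avoid `E`, whence they both lie in `A_6 ∪ B_6`.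
-/

open Finset

/-- The set `E` of `a` special colours. -/
def Eset (a : ℕ) (e : Fin a → ℕ) : Finset ℕ := Finset.image e Finset.univ

/-- The set `S_i = {s_{i,1},…,s_{i,6}}`. -/
def Sset (c : ℕ) (s : Fin c → Fin 6 → ℕ) (i : Fin c) : Finset ℕ :=
  Finset.image (s i) Finset.univ

/-- The set `T_i = {t_{i,1},…,t_{i,4}}`. -/
def Tset (b : ℕ) (t : Fin b → Fin 4 → ℕ) (i : Fin b) : Finset ℕ :=
  Finset.image (t i) Finset.univ

/-- The indices (0-based) of the `s`-colours used in `A_1,…,A_7`. -/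
def Aidx : Fin 7 → Finset (Fin 6) :=
  ![{0,2,4}, {0,2,5}, {0,1,3}, {1,2,3}, {1,4,5}, {0,1,2}, {3,4,5}]

/-- The indices (0-based) of the `t`-colours used in `B_1,…,B_7`. -/
def Bidx : Fin 7 → Finset (Fin 4) :=
  ![{1,2}, {1,3}, {0,1}, {0,2}, {0,3}, {0,1}, {2,3}]

/-- The colour set `A_j` (`j : Fin 7`, 0-based). -/
def Aset (c : ℕ) (s : Fin c → Fin 6 → ℕ) (j : Fin 7) : Finset ℕ :=
  Finset.univ.biUnion fun i => (Aidx j).image (s i)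

/-- The colour set `B_j` (`j : Fin 7`, 0-based). -/
def Bset (b : ℕ) (t : Fin b → Fin 4 → ℕ) (j : Fin 7) : Finset ℕ :=
  Finset.univ.biUnion fun i => (Bidx j).image (t i)

/-- The vertex set of `K_{5⋆(a+1), 2⋆(k-a-1)}` with `k = a+2b+3c`:
`a+1` partite sets `U_i` of size `5` and `k-a-1` partite sets `V_j` of size `2`. -/
abbrev Vtx (a b c : ℕ) :=
  (Fin (a + 1) × Fin 5) ⊕ (Fin (a + 2*b + 3*c - a - 1) × Fin 2)

/-- The list assignment of Lemma `upper lemma 1`: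
`L(u_{i,j}) = A_j ∪ B_j ∪ E` and `L(v_{i,j}) = A_{j+5} ∪ B_{j+5} ∪ E`. -/
def Lassign (a b c : ℕ) (s : Fin c → Fin 6 → ℕ) (t : Fin b → Fin 4 → ℕ)
    (e : Fin a → ℕ) : Vtx a b c → Finset ℕ
  | Sum.inl (_, j) =>
      Aset c s (Fin.castLE (by norm_num) j) ∪ Bset b t (Fin.castLE (by norm_num) j) ∪ Eset a e
  | Sum.inr (_, j) =>
      Aset c s ⟨j.1 + 5, by omega⟩ ∪ Bset b t ⟨j.1 + 5, by omega⟩ ∪ Eset a e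

/-- The partite set containing a vertex. -/
def partOf (a b c : ℕ) : Vtx a b c → Fin (a + 1) ⊕ Fin (a + 2*b + 3*c - a - 1) :=
  Sum.map Prod.fst Prod.fst

/-- The complete multipartite graph `K_{5⋆(a+1), 2⋆(k-a-1)}`. -/
def Gmp (a b c : ℕ) : SimpleGraph (Vtx a b c) :=
  SimpleGraph.fromRel fun x y => partOf a b c x ≠ partOf a b c y

open Finset Function

theorem Finset.sum_card_inter_add_card_le {ι α : Type*} [Fintype ι] [DecidableEq α]
    {U : ι → Finset α} {S Q : Finset α} (hU : Pairwise (Disjoint on U))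
    (hUS : ∀ i, Disjoint (U i) S) (hSQ : S ⊆ Q) : ∑ i, #(U i ∩ Q) + #S ≤ #Q := by
  have hdisj : ((univ : Finset ι) : Set ι).PairwiseDisjoint fun i => U i ∩ Q :=
    fun i _ j _ hij => (hU hij).mono inter_subset_left inter_subset_left
  rw [← card_biUnion hdisj, ← card_union_of_disjoint]
  · refine card_le_card (union_subset ?_ hSQ)
    exact biUnion_subset.2 fun i _ => inter_subset_right
  · exact (disjoint_biUnion_left _ _ _).2 fun i _ => (hUS i).mono_left inter_subset_left

/-- `InAB (inl m) J`: the colours `s_{i,m}` lie in `A_J ∪ B_J`; `InAB (inr q) J`: the colours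
`t_{i,q}` do. -/
def InAB : Fin 6 ⊕ Fin 4 → Fin 7 → Prop
  | .inl m, J => m ∈ Aidx J
  | .inr q, J => q ∈ Bidx J

instance (x : Fin 6 ⊕ Fin 4) (J : Fin 7) : Decidable (InAB x J) := by
  cases x <;> unfold InAB <;> infer_instance

theorem inAB_five_or_six : ∀ x, InAB x 5 ∨ InAB x 6 := by decide

theorem not_forall_inAB_castLE :
    ∀ x, ¬ ∀ j : Fin 5, InAB x (Fin.castLE (by norm_num) j) := by decide

theorem inAB_five_of_forall_or : ∀ x y,
    (∀ j : Fin 5, InAB x (Fin.castLE (by norm_num) j) ∨ InAB y (Fin.castLE (by norm_num) j)) →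
      InAB x 5 ∧ InAB y 5 := by decide

section Colours

variable {a b c : ℕ} {s : Fin c → Fin 6 → ℕ} {t : Fin b → Fin 4 → ℕ}

structure ColoursDistinct (s : Fin c → Fin 6 → ℕ) (t : Fin b → Fin 4 → ℕ) : Prop where
  injective_s : Injective fun p : Fin c × Fin 6 => s p.1 p.2
  injective_t : Injective fun p : Fin b × Fin 4 => t p.1 p.2
  s_ne_t : ∀ (p : Fin c × Fin 6) (q : Fin b × Fin 4), s p.1 p.2 ≠ t q.1 q.2

theorem mem_Aset {J : Fin 7} {z : ℕ} : z ∈ Aset c s J ↔ ∃ i m, m ∈ Aidx J ∧ s i m = z := by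
  simp only [Aset, mem_biUnion, mem_univ, true_and, mem_image]

theorem mem_Bset {J : Fin 7} {z : ℕ} : z ∈ Bset b t J ↔ ∃ i q, q ∈ Bidx J ∧ t i q = z := by
  simp only [Bset, mem_biUnion, mem_univ, true_and, mem_image]

theorem ColoursDistinct.s_mem_iff (h : ColoursDistinct s t) {i : Fin c} {m : Fin 6}
    {J : Fin 7} : s i m ∈ Aset c s J ∪ Bset b t J ↔ InAB (.inl m) J := by
  refine ⟨fun hm => ?_, fun hm => mem_union_left _ (mem_Aset.2 ⟨i, m, hm, rfl⟩)⟩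
  rcases mem_union.1 hm with hA | hB
  · obtain ⟨i', m', hm', he⟩ := mem_Aset.1 hA
    obtain ⟨-, rfl⟩ := Prod.mk.inj (h.injective_s he)
    exact hm'
  · obtain ⟨i', q', -, he⟩ := mem_Bset.1 hB
    exact absurd he.symm (h.s_ne_t (i, m) (i', q'))

theorem ColoursDistinct.t_mem_iff (h : ColoursDistinct s t) {i : Fin b} {q : Fin 4}
    {J : Fin 7} : t i q ∈ Aset c s J ∪ Bset b t J ↔ InAB (.inr q) J := by
  refine ⟨fun hq => ?_, fun hq => mem_union_right _ (mem_Bset.2 ⟨i, q, hq, rfl⟩)⟩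
  rcases mem_union.1 hq with hA | hB
  · obtain ⟨i', m', -, he⟩ := mem_Aset.1 hA
    exact absurd he (h.s_ne_t (i', m') (i, q))
  · obtain ⟨i', q', hq', he⟩ := mem_Bset.1 hB
    obtain ⟨-, rfl⟩ := Prod.mk.inj (h.injective_t he)
    exact hq'

theorem ColoursDistinct.exists_inAB (h : ColoursDistinct s t) {z : ℕ} {J₀ : Fin 7}
    (hz : z ∈ Aset c s J₀ ∪ Bset b t J₀) :
    ∃ x, ∀ J, z ∈ Aset c s J ∪ Bset b t J ↔ InAB x J := by
  rcases mem_union.1 hz with hA | hB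
  · obtain ⟨i, m, -, rfl⟩ := mem_Aset.1 hA
    exact ⟨.inl m, fun _ => h.s_mem_iff⟩
  · obtain ⟨i, q, -, rfl⟩ := mem_Bset.1 hB
    exact ⟨.inr q, fun _ => h.t_mem_iff⟩

end Colours

section Colouring

variable {a b c : ℕ} {s : Fin c → Fin 6 → ℕ} {t : Fin b → Fin 4 → ℕ} {e : Fin a → ℕ}
  {φ : Vtx a b c → ℕ}

def palette (s : Fin c → Fin 6 → ℕ) (t : Fin b → Fin 4 → ℕ) (e : Fin a → ℕ) (J : Fin 7) :
    Finset ℕ :=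
  Aset c s J ∪ Bset b t J ∪ Eset a e

theorem Eset_subset_palette (s : Fin c → Fin 6 → ℕ) (t : Fin b → Fin 4 → ℕ) (J : Fin 7) :
    Eset a e ⊆ palette s t e J :=
  subset_union_right

theorem card_palette_le (J : Fin 7) :
    #(palette s t e J) ≤ c * #(Aidx J) + b * #(Bidx J) + a := by
  have hA : #(Aset c s J) ≤ c * #(Aidx J) := by
    simpa [Aset] using card_biUnion_le_card_mul univ (fun i => (Aidx J).image (s i)) _
      fun i _ => card_image_le
  have hB : #(Bset b t J) ≤ b * #(Bidx J) := by
    simpa [Bset] using card_biUnion_le_card_mul univ (fun i => (Bidx J).image (t i)) _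
      fun i _ => card_image_le
  have hE : #(Eset a e) ≤ a := card_image_le.trans_eq (by simp)
  have := card_union_le (Aset c s J ∪ Bset b t J) (Eset a e)
  have := card_union_le (Aset c s J) (Bset b t J)
  rw [palette]
  omega

/-- `φ(U_i)`. -/
def partColours (φ : Vtx a b c → ℕ) (i : Fin (a + 1)) : Finset ℕ :=
  univ.image fun j : Fin 5 => φ (.inl (i, j))

def smallColours (φ : Vtx a b c → ℕ) (k : Fin 2) : Finset ℕ :=
  univ.image fun w => φ (.inr (w, k))

structure IsLColouring (s : Fin c → Fin 6 → ℕ) (t : Fin b → Fin 4 → ℕ) (e : Fin a → ℕ)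
    (φ : Vtx a b c → ℕ) : Prop where
  mem_Lassign : ∀ v, φ v ∈ Lassign a b c s t e v
  ne_of_adj : ∀ ⦃u v⦄, (Gmp a b c).Adj u v → φ u ≠ φ v

namespace IsLColouring

theorem ne_of_partOf_ne (hφ : IsLColouring s t e φ) {u v : Vtx a b c}
    (h : partOf a b c u ≠ partOf a b c v) : φ u ≠ φ v :=
  hφ.ne_of_adj (SimpleGraph.fromRel_adj _ _ _ |>.2 ⟨fun huv => h (huv ▸ rfl), .inl h⟩)

theorem pairwise_disjoint_partColours (hφ : IsLColouring s t e φ) :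
    Pairwise (Disjoint on partColours φ) := by
  intro i i' hii'
  simp only [onFun, partColours, disjoint_left, mem_image, mem_univ, true_and]
  rintro _ ⟨j, rfl⟩ ⟨j', hj'⟩
  exact hφ.ne_of_partOf_ne (u := .inl (i', j')) (v := .inl (i, j))
    (fun h => hii' (Sum.inl_injective h).symm) hj'

theorem disjoint_partColours_smallColours (hφ : IsLColouring s t e φ) (i : Fin (a + 1))
    (k : Fin 2) : Disjoint (partColours φ i) (smallColours φ k) := by
  simp only [partColours, smallColours, disjoint_left, mem_image, mem_univ, true_and]
  rintro _ ⟨j, rfl⟩ ⟨w, hw⟩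
  exact hφ.ne_of_partOf_ne (u := .inr (w, k)) (v := .inl (i, j)) Sum.inr_ne_inl hw

theorem card_smallColours (hφ : IsLColouring s t e φ) (k : Fin 2) :
    #(smallColours φ k) = a + 2 * b + 3 * c - a - 1 := by
  rw [smallColours, card_image_of_injective, card_univ, Fintype.card_fin]
  intro w w' hww'
  by_contra hne
  exact hφ.ne_of_partOf_ne (u := .inr (w, k)) (v := .inr (w', k))
    (fun h => hne (Sum.inr_injective h)) hww'

theorem smallColours_subset (hφ : IsLColouring s t e φ) (k : Fin 2) :
    smallColours φ k ⊆ palette s t e ⟨k + 5, by omega⟩ := by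
  simp only [smallColours, image_subset_iff, mem_univ, forall_const]
  exact fun w => hφ.mem_Lassign (.inr (w, k))

theorem sum_card_inter_palette_add_le (hφ : IsLColouring s t e φ) (k : Fin 2) :
    ∑ i, #(partColours φ i ∩ palette s t e ⟨k + 5, by omega⟩) + (a + 2 * b + 3 * c - a - 1)
      ≤ #(palette s t e ⟨k + 5, by omega⟩) := by
  rw [← hφ.card_smallColours k]
  exact sum_card_inter_add_card_le hφ.pairwise_disjoint_partColours
    (hφ.disjoint_partColours_smallColours · k) (hφ.smallColours_subset k)


theorem mem_Aset_union_Bset_of_disjoint (hφ : IsLColouring s t e φ) {i : Fin (a + 1)}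
    (hE : Disjoint (partColours φ i) (Eset a e)) (j : Fin 5) :
    φ (.inl (i, j)) ∈
      Aset c s (Fin.castLE (by norm_num) j) ∪ Bset b t (Fin.castLE (by norm_num) j) :=
  (mem_union.1 (hφ.mem_Lassign (.inl (i, j)))).resolve_right
    (disjoint_left.1 hE (mem_image_of_mem _ (mem_univ j)))

theorem exists_inAB_of_mem_partColours (hφ : IsLColouring s t e φ) (hst : ColoursDistinct s t)
    {i : Fin (a + 1)} (hE : Disjoint (partColours φ i) (Eset a e)) {z : ℕ}
    (hz : z ∈ partColours φ i) : ∃ x, ∀ J, z ∈ Aset c s J ∪ Bset b t J ↔ InAB x J := by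
  obtain ⟨j, -, rfl⟩ := mem_image.1 hz
  exact hst.exists_inAB (hφ.mem_Aset_union_Bset_of_disjoint hE j)

theorem one_lt_card_partColours (hφ : IsLColouring s t e φ) (hst : ColoursDistinct s t)
    {i : Fin (a + 1)} (hE : Disjoint (partColours φ i) (Eset a e)) :
    1 < #(partColours φ i) := by
  by_contra! hle
  have h0 : φ (.inl (i, 0)) ∈ partColours φ i := mem_image_of_mem _ (mem_univ _)
  obtain ⟨x, hx⟩ := hφ.exists_inAB_of_mem_partColours hst hE h0
  refine not_forall_inAB_castLE x fun j => (hx _).1 ?_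
  have hj : φ (.inl (i, j)) = φ (.inl (i, 0)) :=
    card_le_one.1 hle _ (mem_image_of_mem _ (mem_univ _)) _ h0
  exact hj ▸ hφ.mem_Aset_union_Bset_of_disjoint hE j

theorem partColours_subset_of_card_eq_two (hφ : IsLColouring s t e φ)
    (hst : ColoursDistinct s t) {i : Fin (a + 1)} (hE : Disjoint (partColours φ i) (Eset a e))
    (h2 : #(partColours φ i) = 2) : partColours φ i ⊆ Aset c s 5 ∪ Bset b t 5 := by
  obtain ⟨z, z', -, hzz'⟩ := card_eq_two.1 h2
  obtain ⟨x, hx⟩ := hφ.exists_inAB_of_mem_partColours hst hE (hzz' ▸ mem_insert_self z {z'})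
  obtain ⟨x', hx'⟩ := hφ.exists_inAB_of_mem_partColours hst hE
    (hzz' ▸ mem_insert_of_mem (mem_singleton_self z'))
  have hcover : ∀ j : Fin 5,
      InAB x (Fin.castLE (by norm_num) j) ∨ InAB x' (Fin.castLE (by norm_num) j) := by
    intro j
    have hj := hφ.mem_Aset_union_Bset_of_disjoint hE j
    have hzj : φ (.inl (i, j)) ∈ ({z, z'} : Finset ℕ) := hzz' ▸ mem_image_of_mem _ (mem_univ j)
    rcases mem_insert.1 hzj with h | h
    · exact .inl ((hx _).1 (h ▸ hj))
    · exact .inr ((hx' _).1 (mem_singleton.1 h ▸ hj))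
  obtain ⟨h5, h5'⟩ := inAB_five_of_forall_or x x' hcover
  rw [hzz', insert_subset_iff, singleton_subset_iff]
  exact ⟨(hx 5).2 h5, (hx' 5).2 h5'⟩

theorem partColours_subset_palette_union (hφ : IsLColouring s t e φ)
    (hst : ColoursDistinct s t) (i : Fin (a + 1)) :
    partColours φ i ⊆ palette s t e 5 ∪ palette s t e 6 := by
  intro z hz
  obtain ⟨j, -, rfl⟩ := mem_image.1 hz
  rcases mem_union.1 (hφ.mem_Lassign (.inl (i, j))) with hAB | hE
  · obtain ⟨x, hx⟩ := hst.exists_inAB hAB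
    rcases inAB_five_or_six x with h | h
    · exact mem_union_left _ (mem_union_left _ ((hx 5).2 h))
    · exact mem_union_right _ (mem_union_left _ ((hx 6).2 h))
  · exact mem_union_left _ (mem_union_right _ hE)

theorem partColours_inter_palette_union (hφ : IsLColouring s t e φ)
    (hst : ColoursDistinct s t) (i : Fin (a + 1)) :
    partColours φ i ∩ palette s t e 5 ∪ partColours φ i ∩ palette s t e 6 = partColours φ i := by
  rw [← inter_union_distrib_left, inter_eq_left.2 (hφ.partColours_subset_palette_union hst i)]

theorem two_le_card_inter_palette_add (hφ : IsLColouring s t e φ) (hst : ColoursDistinct s t)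
    (i : Fin (a + 1)) :
    2 ≤ #(partColours φ i ∩ palette s t e 5) + #(partColours φ i ∩ palette s t e 6) := by
  by_cases hE : Disjoint (partColours φ i) (Eset a e)
  · calc 2 ≤ #(partColours φ i) := hφ.one_lt_card_partColours hst hE
      _ = #(partColours φ i ∩ palette s t e 5 ∪ partColours φ i ∩ palette s t e 6) := by
        rw [hφ.partColours_inter_palette_union hst]
      _ ≤ _ := card_union_le _ _
  · obtain ⟨z, hzU, hzE⟩ := not_disjoint_iff.1 hE
    have h5 := card_pos.2 ⟨z, mem_inter.2 ⟨hzU, Eset_subset_palette s t 5 hzE⟩⟩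
    have h6 := card_pos.2 ⟨z, mem_inter.2 ⟨hzU, Eset_subset_palette s t 6 hzE⟩⟩
    omega

theorem card_inter_palette_add_le_two (hφ : IsLColouring s t e φ) (hst : ColoursDistinct s t)
    (i : Fin (a + 1)) :
    #(partColours φ i ∩ palette s t e 5) + #(partColours φ i ∩ palette s t e 6) ≤ 2 := by
  have hlow : ∀ i' ∈ univ, 2 ≤
      #(partColours φ i' ∩ palette s t e 5) + #(partColours φ i' ∩ palette s t e 6) :=
    fun i' _ => hφ.two_le_card_inter_palette_add hst i'
  have hsum : ∑ i',
      (#(partColours φ i' ∩ palette s t e 5) + #(partColours φ i' ∩ palette s t e 6))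
        ≤ ∑ _i' : Fin (a + 1), 2 := by
    have h5 : ∑ i', #(partColours φ i' ∩ palette s t e 5) + (a + 2 * b + 3 * c - a - 1)
        ≤ #(palette s t e 5) := hφ.sum_card_inter_palette_add_le 0
    have h6 : ∑ i', #(partColours φ i' ∩ palette s t e 6) + (a + 2 * b + 3 * c - a - 1)
        ≤ #(palette s t e 6) := hφ.sum_card_inter_palette_add_le 1
    have c5 : #(palette s t e 5) ≤ c * 3 + b * 2 + a := card_palette_le 5
    have c6 : #(palette s t e 6) ≤ c * 3 + b * 2 + a := card_palette_le 6
    rw [sum_add_distrib, sum_const, card_univ, Fintype.card_fin, smul_eq_mul]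
    omega
  exact ((sum_eq_sum_iff_of_le hlow).1 (le_antisymm (sum_le_sum hlow) hsum) i
    (mem_univ i)).ge

theorem disjoint_partColours_Eset_of_card_eq_two (hφ : IsLColouring s t e φ)
    (hst : ColoursDistinct s t) {i : Fin (a + 1)} (h2 : #(partColours φ i) = 2) :
    Disjoint (partColours φ i) (Eset a e) := by
  refine disjoint_left.2 fun z hzU hzE => ?_
  have hunion := card_union_add_card_inter
    (partColours φ i ∩ palette s t e 5) (partColours φ i ∩ palette s t e 6)
  rw [hφ.partColours_inter_palette_union hst, h2] at hunion
  have hinter := card_pos.2 ⟨z, mem_inter.2 ⟨mem_inter.2 ⟨hzU, Eset_subset_palette s t 5 hzE⟩,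
    mem_inter.2 ⟨hzU, Eset_subset_palette s t 6 hzE⟩⟩⟩
  have := hφ.card_inter_palette_add_le_two hst i
  omega

end IsLColouring

end Colouring

theorem stmt10_general (a b c : ℕ) (s : Fin c → Fin 6 → ℕ) (t : Fin b → Fin 4 → ℕ)
    (e : Fin a → ℕ)
    (hs : Function.Injective fun p : Fin c × Fin 6 => s p.1 p.2)
    (ht : Function.Injective fun p : Fin b × Fin 4 => t p.1 p.2)
    (hst : ∀ (p : Fin c × Fin 6) (q : Fin b × Fin 4), s p.1 p.2 ≠ t q.1 q.2)
    (φ : Vtx a b c → ℕ)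
    (hmem : ∀ v, φ v ∈ Lassign a b c s t e v)
    (hproper : ∀ ⦃u v⦄, (Gmp a b c).Adj u v → φ u ≠ φ v)
    (i : Fin (a + 1))
    (h2 : (Finset.univ.image fun j : Fin 5 => φ (Sum.inl (i, j))).card = 2) :
    (Finset.univ.image fun j : Fin 5 => φ (Sum.inl (i, j))) ⊆
      Aset c s 5 ∪ Bset b t 5 := by
  have hφ : IsLColouring s t e φ := ⟨hmem, hproper⟩
  have hdist : ColoursDistinct s t := ⟨hs, ht, hst⟩
  exact hφ.partColours_subset_of_card_eq_two hdist
    (hφ.disjoint_partColours_Eset_of_card_eq_two hdist h2) h2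

/-- Claim 3.1 (`clm-1a`): if `φ` is a proper colouring of
`K_{5⋆(a+1),2⋆(k-a-1)}` from the lists of Lemma `upper lemma 1` and a
partite set `U_i` of size `5` gets exactly two colours, then
`φ(U_i) ⊆ A_6 ∪ B_6` (0-based: `Aset c s 5 ∪ Bset b t 5`). -/
theorem stmt10 (a b c : ℕ) (s : Fin c → Fin 6 → ℕ) (t : Fin b → Fin 4 → ℕ)
    (e : Fin a → ℕ)
    (hs : Function.Injective fun p : Fin c × Fin 6 => s p.1 p.2)
    (ht : Function.Injective fun p : Fin b × Fin 4 => t p.1 p.2)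
    (he : Function.Injective e)
    (hst : ∀ (p : Fin c × Fin 6) (q : Fin b × Fin 4), s p.1 p.2 ≠ t q.1 q.2)
    (hse : ∀ (p : Fin c × Fin 6) (m : Fin a), s p.1 p.2 ≠ e m)
    (hte : ∀ (q : Fin b × Fin 4) (m : Fin a), t q.1 q.2 ≠ e m)
    (φ : Vtx a b c → ℕ)
    (hmem : ∀ v, φ v ∈ Lassign a b c s t e v)
    (hproper : ∀ ⦃u v⦄, (Gmp a b c).Adj u v → φ u ≠ φ v)
    (i : Fin (a + 1))
    (h2 : (Finset.univ.image fun j : Fin 5 => φ (Sum.inl (i, j))).card = 2) :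
    (Finset.univ.image fun j : Fin 5 => φ (Sum.inl (i, j))) ⊆
      Aset c s 5 ∪ Bset b t 5 :=
  stmt10_general a b c s t e hs ht hst φ hmem hproper i h2
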